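/- arXiv:1705.09396 — 2 statements merged into one kernel-verified Lean document; each statement's English description precedes it below -/
import Mathlib

section
/- Let f be convex on W = conv(S) with curvature at most M, let w* minimize f over W, and suppose w_{k+1} = (1-η_k)w_k + η_k d_k where d_k ∈ S satisfies ⟨∇f(w_k), d_k⟩ ≤ min_{d∈S} ⟨∇f(w_k), d⟩ + ε_k. Then f(w_{k+1}) - f(w*) ≤ (1-η_k)(f(w_k) - f(w*)) + η_k ε_k + (M/2)η_k². -/
/-!
The first-order condition for convexity bounds the linear gap `⟪∇f(w), w* - w⟫` by
`f(w*) - f(w)`, and since `d ↦ ⟪∇f(w), d⟫` is linear its minimum over `conv S` is attained on `S`,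
so the approximate linear minimiser `d` satisfies `⟪∇f(w), d - w⟫ ≤ f(w*) - f(w) + ε`.
Substituting this into the curvature bound for the step `w + η (d - w)` gives the recurrence.
-/

open RealInnerProductSpace

theorem ConvexOn.apply_sub_le_of_hasFDerivAt {E : Type*} [NormedAddCommGroup E] [NormedSpace ℝ E]
    {W : Set E} {f : E → ℝ} {f' : E →L[ℝ] ℝ} {x y : E} (hf : ConvexOn ℝ W f) (hx : x ∈ W)
    (hy : y ∈ W) (hf' : HasFDerivAt f f' x) : f' (y - x) ≤ f y - f x := by
  set ℓ : ℝ →ᵃ[ℝ] E := AffineMap.lineMap x y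
  have hℓ0 : ℓ 0 = x := AffineMap.lineMap_apply_zero x y
  have hℓ1 : ℓ 1 = y := AffineMap.lineMap_apply_one x y
  have hline : ConvexOn ℝ (ℓ ⁻¹' W) (f ∘ ℓ) := hf.comp_affineMap ℓ
  have hderiv : HasDerivAt (f ∘ ℓ) (f' (y - x)) 0 := by
    refine HasFDerivAt.comp_hasDerivAt (0 : ℝ) ?_ AffineMap.hasDerivAt_lineMap
    rwa [hℓ0]
  simpa [slope_def_field, hℓ0, hℓ1] using
    hline.le_slope_of_hasDerivAt (by simpa [hℓ0]) (by simpa [hℓ1]) zero_lt_one hderiv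

theorem ConvexOn.inner_sub_le_of_hasGradientAt {E : Type*} [NormedAddCommGroup E]
    [InnerProductSpace ℝ E] [CompleteSpace E] {W : Set E} {f : E → ℝ} {G x y : E}
    (hf : ConvexOn ℝ W f) (hx : x ∈ W) (hy : y ∈ W) (hG : HasGradientAt f G x) :
    ⟪G, y - x⟫ ≤ f y - f x :=
  hf.apply_sub_le_of_hasFDerivAt hx hy hG.hasFDerivAt

theorem stmt_7_general (n : ℕ) (M : ℝ) (S : Set (EuclideanSpace ℝ (Fin n)))
    (W : Set (EuclideanSpace ℝ (Fin n))) (hW : W = convexHull ℝ S)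
    (f : EuclideanSpace ℝ (Fin n) → ℝ) (g : EuclideanSpace ℝ (Fin n) → EuclideanSpace ℝ (Fin n))
    (hf : ConvexOn ℝ W f)
    (hg : ∀ x ∈ W, HasGradientAt f (g x) x)
    (hcurv : ∀ w ∈ W, ∀ d ∈ S, ∀ η ∈ Set.Icc (0 : ℝ) 1,
      f ((1 - η) • w + η • d) ≤ f w + η * ⟪g w, d - w⟫ + (M / 2) * η ^ 2)
    (wstar : EuclideanSpace ℝ (Fin n)) (hws : wstar ∈ W)
    (ηk εk : ℝ) (hηk : ηk ∈ Set.Icc (0 : ℝ) 1)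
    (wk dk : EuclideanSpace ℝ (Fin n)) (hwk : wk ∈ W) (hdk : dk ∈ S)
    (happrox : ∀ d ∈ S, ⟪g wk, dk⟫ ≤ ⟪g wk, d⟫ + εk) :
    f ((1 - ηk) • wk + ηk • dk) - f wstar
      ≤ (1 - ηk) * (f wk - f wstar) + ηk * εk + (M / 2) * ηk ^ 2 := by
  obtain ⟨d, hdS, hd⟩ := ((innerₛₗ ℝ (g wk)).concaveOn convex_univ).exists_le_of_mem_convexHull
    (Set.subset_univ S) (hW ▸ hws)
  have hdual : ⟪g wk, dk⟫ ≤ ⟪g wk, wstar⟫ + εk := by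
    simp only [innerₛₗ_apply_apply] at hd
    linarith [happrox d hdS]
  have hgap : ⟪g wk, dk - wk⟫ ≤ f wstar - f wk + εk := by
    have hfirst := hf.inner_sub_le_of_hasGradientAt hwk hws (hg wk hwk)
    rw [inner_sub_right] at hfirst ⊢
    linarith
  linarith [hcurv wk hwk dk hdk ηk hηk, mul_le_mul_of_nonneg_left hgap hηk.1]

theorem stmt_7 (n : ℕ) (M : ℝ) (S : Set (EuclideanSpace ℝ (Fin n))) (hS : IsCompact S)
    (W : Set (EuclideanSpace ℝ (Fin n))) (hW : W = convexHull ℝ S)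
    (f : EuclideanSpace ℝ (Fin n) → ℝ) (g : EuclideanSpace ℝ (Fin n) → EuclideanSpace ℝ (Fin n))
    (hf : ConvexOn ℝ W f)
    (hg : ∀ x ∈ W, HasGradientAt f (g x) x)
    (hcurv : ∀ w ∈ W, ∀ d ∈ S, ∀ η ∈ Set.Icc (0 : ℝ) 1,
      f ((1 - η) • w + η • d) ≤ f w + η * ⟪g w, d - w⟫ + (M / 2) * η ^ 2)
    (wstar : EuclideanSpace ℝ (Fin n)) (hws : wstar ∈ W) (hmin : ∀ x ∈ W, f wstar ≤ f x)
    (ηk εk : ℝ) (hηk : ηk ∈ Set.Icc (0 : ℝ) 1) (hεk : 0 ≤ εk)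
    (wk dk : EuclideanSpace ℝ (Fin n)) (hwk : wk ∈ W) (hdk : dk ∈ S)
    (happrox : ∀ d ∈ S, ⟪g wk, dk⟫ ≤ ⟪g wk, d⟫ + εk) :
    f ((1 - ηk) • wk + ηk • dk) - f wstar
      ≤ (1 - ηk) * (f wk - f wstar) + ηk * εk + (M / 2) * ηk ^ 2 :=
  stmt_7_general n M S W hW f g hf hg hcurv wstar hws ηk εk hηk wk dk hwk hdk happrox
end

section
/- Let f be convex on W = conv(S) with curvature at most M. Suppose w ∈ W, η ∈ [0,1], and d ∈ S satisfy ⟨∇f(w), d⟩ ≤ min_{d'∈S} ⟨∇f(w), d'⟩ + ε. Then f((1-η)w + ηd) ≤ min_{d'∈S} f((1-η)w + ηd') + η(ε + (M/2)η). -/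
open RealInnerProductSpace

/-!
Write `y = (1 - η) w + η d'`. The curvature bound bounds `f` at the step towards `d` by
`f w + η ⟪∇f w, d - w⟫ + (M/2) η²`, and convexity (the tangent plane at `w` lies below `f`) bounds
`f y` from below by `f w + η ⟪∇f w, d' - w⟫`. The two linear terms differ by at most `η ε`.
-/

section FirstOrderCondition

variable {E : Type*} [NormedAddCommGroup E]

theorem ConvexOn.add_fderiv_sub_le [NormedSpace ℝ E] {s : Set E} {f : E → ℝ} {f' : E →L[ℝ] ℝ}
    {x y : E} (hf : ConvexOn ℝ s f) (hx : x ∈ s) (hy : y ∈ s) (hf' : HasFDerivAt f f' x) :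
    f x + f' (y - x) ≤ f y := by
  have hline : ConvexOn ℝ (AffineMap.lineMap (k := ℝ) x y ⁻¹' s) (f ∘ AffineMap.lineMap x y) :=
    hf.comp_affineMap _
  have hderiv : HasDerivAt (f ∘ AffineMap.lineMap (k := ℝ) x y) (f' (y - x)) 0 :=
    hf'.comp_hasDerivAt_of_eq 0 AffineMap.hasDerivAt_lineMap
      (AffineMap.lineMap_apply_zero x y).symm
  have hslope :=
    hline.le_slope_of_hasDerivAt (x := 0) (y := 1) (by simpa) (by simpa) one_pos hderiv
  rw [slope_def_field] at hslope
  simp only [Function.comp_apply, AffineMap.lineMap_apply_zero, AffineMap.lineMap_apply_one,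
    sub_zero, div_one] at hslope
  linarith

theorem ConvexOn.add_inner_gradient_sub_le [InnerProductSpace ℝ E] [CompleteSpace E]
    {s : Set E} {f : E → ℝ} {g x y : E} (hf : ConvexOn ℝ s f) (hx : x ∈ s) (hy : y ∈ s)
    (hg : HasGradientAt f g x) :
    f x + ⟪g, y - x⟫ ≤ f y := by
  simpa using hf.add_fderiv_sub_le hx hy hg.hasFDerivAt

end FirstOrderCondition

theorem stmt_9_general (n : ℕ) (M ε : ℝ)
    (S : Set (EuclideanSpace ℝ (Fin n)))
    (W : Set (EuclideanSpace ℝ (Fin n))) (hW : W = convexHull ℝ S)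
    (f : EuclideanSpace ℝ (Fin n) → ℝ) (g : EuclideanSpace ℝ (Fin n) → EuclideanSpace ℝ (Fin n))
    (hf : ConvexOn ℝ W f)
    (hg : ∀ x ∈ W, HasGradientAt f (g x) x)
    (hcurv : ∀ w ∈ W, ∀ d ∈ S, ∀ η ∈ Set.Icc (0 : ℝ) 1,
      f ((1 - η) • w + η • d) ≤ f w + η * ⟪g w, d - w⟫ + (M / 2) * η ^ 2)
    (w d : EuclideanSpace ℝ (Fin n)) (hw : w ∈ W) (hd : d ∈ S)
    (η : ℝ) (hη : η ∈ Set.Icc (0 : ℝ) 1)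
    (happrox : ∀ d' ∈ S, ⟪g w, d⟫ ≤ ⟪g w, d'⟫ + ε) :
    ∀ d' ∈ S, f ((1 - η) • w + η • d) ≤ f ((1 - η) • w + η • d') + η * (ε + (M / 2) * η) := by
  intro d' hd'
  have hSW : S ⊆ W := hW ▸ subset_convexHull ℝ S
  have hstep : (1 - η) • w + η • d' = AffineMap.lineMap w d' η :=
    (AffineMap.lineMap_apply_module w d' η).symm
  have hstepW : AffineMap.lineMap w d' η ∈ W :=
    hf.1.lineMap_mem hw (hSW hd') hη
  have htangent : f w + η * ⟪g w, d' - w⟫ ≤ f (AffineMap.lineMap w d' η) := by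
    simpa [AffineMap.lineMap_apply_module', real_inner_smul_right]
      using hf.add_inner_gradient_sub_le hw hstepW (hg w hw)
  have hlinear : η * ⟪g w, d - w⟫ ≤ η * ⟪g w, d' - w⟫ + η * ε := by
    rw [← mul_add]
    refine mul_le_mul_of_nonneg_left ?_ hη.1
    simpa only [inner_sub_right, sub_add_eq_add_sub] using sub_le_sub_right (happrox d' hd') _
  rw [hstep]
  linarith [hcurv w hw d hd η hη]

theorem stmt_9 (n : ℕ) (M ε : ℝ) (hε : 0 ≤ ε)
    (S : Set (EuclideanSpace ℝ (Fin n))) (hS : IsCompact S)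
    (W : Set (EuclideanSpace ℝ (Fin n))) (hW : W = convexHull ℝ S)
    (f : EuclideanSpace ℝ (Fin n) → ℝ) (g : EuclideanSpace ℝ (Fin n) → EuclideanSpace ℝ (Fin n))
    (hf : ConvexOn ℝ W f)
    (hg : ∀ x ∈ W, HasGradientAt f (g x) x)
    (hcurv : ∀ w ∈ W, ∀ d ∈ S, ∀ η ∈ Set.Icc (0 : ℝ) 1,
      f ((1 - η) • w + η • d) ≤ f w + η * ⟪g w, d - w⟫ + (M / 2) * η ^ 2)
    (w d : EuclideanSpace ℝ (Fin n)) (hw : w ∈ W) (hd : d ∈ S)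
    (η : ℝ) (hη : η ∈ Set.Icc (0 : ℝ) 1)
    (happrox : ∀ d' ∈ S, ⟪g w, d⟫ ≤ ⟪g w, d'⟫ + ε) :
    ∀ d' ∈ S, f ((1 - η) • w + η • d) ≤ f ((1 - η) • w + η • d') + η * (ε + (M / 2) * η) :=
  stmt_9_general n M ε S W hW f g hf hg hcurv w d hw hd η hη happrox
end
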